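/- arXiv:2210.16401 — 8 statements merged into one kernel-verified Lean document; each statement's English description precedes it below -/
import Mathlib

section
/- For any p_y ∈ [0,1], the inequality chain 1 − p_y ≤ 2(1 − √p_y) ≤ (arccos √p_y)² ≤ −log p_y holds (where −log p_y is interpreted as +∞ when p_y = 0). -/
open Real

lemma key_log_cos (θ : ℝ) (h0 : 0 ≤ θ) (h : θ < π / 2) :
    θ ^ 2 / 2 ≤ - Real.log (Real.cos θ) := by
  set g : ℝ → ℝ := fun t => - Real.log (Real.cos t) - t ^ 2 / 2 with hg
  have hcos : ∀ t ∈ Set.Icc (0:ℝ) θ, 0 < Real.cos t := by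
    intro t ht
    exact Real.cos_pos_of_mem_Ioo ⟨by linarith [ht.1, Real.pi_pos], lt_of_le_of_lt ht.2 h⟩
  have hder : ∀ t, Real.cos t ≠ 0 → HasDerivAt g (Real.sin t / Real.cos t - t) t := by
    intro t hct
    have h1 : HasDerivAt (fun u => Real.log (Real.cos u)) ((Real.cos t)⁻¹ * -Real.sin t) t :=
      (Real.hasDerivAt_log hct).comp t (Real.hasDerivAt_cos t)
    have h2 : HasDerivAt (fun u : ℝ => u ^ 2 / 2) ((2 : ℕ) * t ^ (2 - 1) / 2) t :=
      (hasDerivAt_pow 2 t).div_const 2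
    have := h1.neg.sub h2
    refine HasDerivAt.congr_deriv this ?_
    rw [show (2:ℕ) - 1 = 1 from rfl]; push_cast; ring
  have hmono : MonotoneOn g (Set.Icc 0 θ) := by
    apply monotoneOn_of_deriv_nonneg (convex_Icc 0 θ)
    · apply ContinuousOn.sub
      · exact (Real.continuousOn_log.comp Real.continuous_cos.continuousOn
          (fun t ht => ne_of_gt (hcos t ht))).neg
      · fun_prop
    · intro t ht
      rw [interior_Icc] at ht
      exact (hder t (ne_of_gt (hcos t ⟨ht.1.le, ht.2.le⟩))).differentiableAt.differentiableWithinAt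
    · intro t ht
      rw [interior_Icc] at ht
      have hct := ne_of_gt (hcos t ⟨ht.1.le, ht.2.le⟩)
      rw [(hder t hct).deriv]
      have htan := Real.lt_tan ht.1 (lt_trans ht.2 h)
      rw [Real.tan_eq_sin_div_cos] at htan
      linarith
  have := hmono (Set.left_mem_Icc.2 h0) (Set.right_mem_Icc.2 h0) h0
  simp [hg, Real.cos_zero, Real.log_one] at this
  linarith

theorem loss_inequality_chain (x : ℝ) (hx0 : 0 ≤ x) (hx1 : x ≤ 1) :
    1 - x ≤ 2 * (1 - Real.sqrt x) ∧
    2 * (1 - Real.sqrt x) ≤ (arccos (Real.sqrt x)) ^ 2 ∧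
    (0 < x → (arccos (Real.sqrt x)) ^ 2 ≤ - Real.log x) := by
  set s := Real.sqrt x with hs
  have hs0 : 0 ≤ s := Real.sqrt_nonneg x
  have hs1 : s ≤ 1 := by rw [hs, show (1:ℝ) = Real.sqrt 1 by simp]; exact Real.sqrt_le_sqrt hx1
  have hsx : s ^ 2 = x := Real.sq_sqrt hx0
  set θ := Real.arccos s with hθ
  have hcosθ : Real.cos θ = s := Real.cos_arccos (by linarith) hs1
  have hθ0 : 0 ≤ θ := Real.arccos_nonneg s
  refine ⟨by nlinarith, ?_, ?_⟩
  · have := Real.one_sub_sq_div_two_le_cos (x := θ)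
    rw [hcosθ] at this
    linarith
  · intro hx
    have hspos : 0 < s := Real.sqrt_pos.2 hx
    have hθlt : θ < π / 2 := by
      rw [hθ]
      exact Real.arccos_lt_pi_div_two.2 hspos
    have hk := key_log_cos θ hθ0 hθlt
    rw [hcosθ] at hk
    have hlogx : Real.log x = 2 * Real.log s := by
      rw [← hsx, Real.log_pow]; push_cast; ring
    rw [hlogx]; linarith
end

section
/- For all x ∈ (0,1], (arccos √x)² ≤ −log x. -/
open Real

lemma aux_sq_le_neg_two_log_cos {θ : ℝ} (h0 : 0 ≤ θ) (h2 : θ < π / 2) :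
    θ ^ 2 ≤ -(2 * Real.log (Real.cos θ)) := by
  have key : AntitoneOn (fun t : ℝ => t ^ 2 + 2 * Real.log (Real.cos t)) (Set.Icc 0 θ) := by
    apply antitoneOn_of_deriv_nonpos (convex_Icc 0 θ)
    · apply ContinuousOn.add (by fun_prop)
      apply ContinuousOn.mul continuousOn_const
      apply ContinuousOn.log (Real.continuous_cos.continuousOn)
      intro t ht
      have : Real.cos t > 0 := Real.cos_pos_of_mem_Ioo
        ⟨by linarith [ht.1, Real.pi_pos], by linarith [ht.2]⟩
      positivity
    · intro t ht
      rw [interior_Icc] at ht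
      have hc : Real.cos t > 0 := Real.cos_pos_of_mem_Ioo
        ⟨by linarith [ht.1, Real.pi_pos], by linarith [ht.2]⟩
      have h1 : HasDerivAt (fun y : ℝ => Real.log (Real.cos y)) (-Real.sin t / Real.cos t) t :=
        (Real.hasDerivAt_cos t).log hc.ne'
      exact ((hasDerivAt_pow 2 t).add (h1.const_mul 2)).differentiableAt.differentiableWithinAt
    · intro t ht
      rw [interior_Icc] at ht
      have ht0 : 0 < t := ht.1
      have ht2 : t < π / 2 := lt_trans ht.2 h2
      have hc : Real.cos t > 0 := Real.cos_pos_of_mem_Ioo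
        ⟨by linarith [Real.pi_pos], ht2⟩
      have h1 : HasDerivAt (fun y : ℝ => Real.log (Real.cos y)) (-Real.sin t / Real.cos t) t :=
        (Real.hasDerivAt_cos t).log hc.ne'
      have h2' : HasDerivAt (fun y : ℝ => y ^ 2 + 2 * Real.log (Real.cos y))
          (2 * t ^ 1 + 2 * (-Real.sin t / Real.cos t)) t :=
        (hasDerivAt_pow 2 t).add (h1.const_mul 2)
      rw [h2'.deriv]
      have htan : t < Real.tan t := Real.lt_tan ht0 ht2
      rw [Real.tan_eq_sin_div_cos] at htan
      have : -Real.sin t / Real.cos t = -(Real.sin t / Real.cos t) := by ring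
      rw [this]
      nlinarith
  have := key (Set.left_mem_Icc.2 h0) (Set.right_mem_Icc.2 h0) h0
  simp [Real.cos_zero, Real.log_one] at this
  linarith

theorem fisher_rao_le_cross_entropy (x : ℝ) (hx0 : 0 < x) (hx1 : x ≤ 1) :
    (arccos (Real.sqrt x)) ^ 2 ≤ - Real.log x := by
  have hs0 : 0 < Real.sqrt x := Real.sqrt_pos.2 hx0
  have hs1 : Real.sqrt x ≤ 1 := by
    rw [show (1:ℝ) = Real.sqrt 1 by simp]
    exact Real.sqrt_le_sqrt hx1
  set θ := Real.arccos (Real.sqrt x) with hθ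
  have h0 : 0 ≤ θ := Real.arccos_nonneg _
  have h2 : θ < π / 2 := Real.arccos_lt_pi_div_two.2 hs0
  have hcos : Real.cos θ = Real.sqrt x := Real.cos_arccos (by linarith) hs1
  have hlog : Real.log x = 2 * Real.log (Real.cos θ) := by
    rw [hcos, Real.log_sqrt hx0.le]; ring
  rw [hlog]
  exact aux_sq_le_neg_two_log_cos h0 h2
end

section
/- For all t ≥ 0, (arccos √(e^{−t}))² ≤ t, and lim_{t→0⁺} (arccos √(e^{−t}))²/t = 1. -/
open Real Filter

lemma cos_le_exp_key {θ : ℝ} (h0 : 0 ≤ θ) (h1 : θ < π / 2) :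
    Real.cos θ ≤ Real.exp (-(θ ^ 2 / 2)) := by
  have hcos : ∀ x ∈ Set.Ico 0 (π / 2), 0 < Real.cos x := fun x hx =>
    Real.cos_pos_of_mem_Ioo ⟨lt_of_lt_of_le (by have := Real.pi_pos; linarith) hx.1, hx.2⟩
  set f : ℝ → ℝ := fun x => Real.log (Real.cos x) + x ^ 2 / 2 with hf
  have hderiv : ∀ x ∈ Set.Ioo (0 : ℝ) (π / 2),
      HasDerivAt f ((Real.cos x)⁻¹ * (-Real.sin x) + x) x := by
    intro x hx
    have hc : Real.cos x ≠ 0 := (hcos x ⟨hx.1.le, hx.2⟩).ne'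
    have h1 : HasDerivAt (fun x => Real.log (Real.cos x)) ((Real.cos x)⁻¹ * (-Real.sin x)) x :=
      (Real.hasDerivAt_log hc).comp x (Real.hasDerivAt_cos x)
    have h2 : HasDerivAt (fun x : ℝ => x ^ 2 / 2) x x := by
      have := ((hasDerivAt_pow 2 x).div_const 2)
      simpa using this
    exact h1.add h2
  have hanti : AntitoneOn f (Set.Ico 0 (π / 2)) := by
    apply antitoneOn_of_deriv_nonpos (convex_Ico _ _)
    · apply ContinuousOn.add
      · exact (Real.continuousOn_log.comp Real.continuous_cos.continuousOn
          (fun x hx => (hcos x hx).ne'))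
      · exact (continuous_pow 2).continuousOn.div_const 2
    · intro x hx
      rw [interior_Ico] at hx
      exact ((hderiv x hx).differentiableAt).differentiableWithinAt
    · intro x hx
      rw [interior_Ico] at hx
      rw [(hderiv x hx).deriv]
      have htan : x ≤ Real.tan x := (Real.lt_tan hx.1 hx.2).le
      rw [Real.tan_eq_sin_div_cos] at htan
      have : (Real.cos x)⁻¹ * (-Real.sin x) = -(Real.sin x / Real.cos x) := by
        field_simp
      rw [this]
      linarith
  have hle : f θ ≤ f 0 := hanti (by constructor <;> [exact le_refl 0; positivity]) ⟨h0, h1⟩ h0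
  have hf0 : f 0 = 0 := by simp [hf]
  have : Real.log (Real.cos θ) ≤ -(θ ^ 2 / 2) := by
    have := hle; rw [hf0] at this; simp only [hf] at this; linarith
  calc Real.cos θ = Real.exp (Real.log (Real.cos θ)) :=
        (Real.exp_log (hcos θ ⟨h0, h1⟩)).symm
    _ ≤ Real.exp (-(θ ^ 2 / 2)) := Real.exp_le_exp.mpr this

lemma bounds (t : ℝ) (ht : 0 ≤ t) :
    1 - Real.exp (-t) ≤ (arccos (Real.sqrt (Real.exp (-t)))) ^ 2 ∧
    (arccos (Real.sqrt (Real.exp (-t)))) ^ 2 ≤ t := by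
  set u : ℝ := Real.sqrt (Real.exp (-t)) with hu
  have hupos : 0 < u := Real.sqrt_pos.mpr (Real.exp_pos _)
  have hule : u ≤ 1 := by
    rw [hu, show (1:ℝ) = Real.sqrt 1 by simp]
    exact Real.sqrt_le_sqrt (Real.exp_le_one_iff.mpr (by linarith))
  have husq : u ^ 2 = Real.exp (-t) := Real.sq_sqrt (Real.exp_pos _).le
  set θ := arccos u with hθ
  have hθ0 : 0 ≤ θ := Real.arccos_nonneg u
  have hθlt : θ < π / 2 := Real.arccos_lt_pi_div_two.mpr hupos
  have hcosθ : Real.cos θ = u := Real.cos_arccos (by linarith) hule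
  constructor
  · have hsin : Real.sin θ ≤ θ := Real.sin_le hθ0
    have hsinn : 0 ≤ Real.sin θ := by
      rw [hθ, Real.sin_arccos]; positivity
    have : Real.sin θ ^ 2 ≤ θ ^ 2 := by nlinarith
    have hsinval : Real.sin θ ^ 2 = 1 - u ^ 2 := by
      rw [hθ, Real.sin_arccos, Real.sq_sqrt (by nlinarith : (0:ℝ) ≤ 1 - u ^ 2)]
    rw [← husq, ← hsinval]; exact this
  · have key := cos_le_exp_key hθ0 hθlt
    rw [hcosθ] at key
    have hval : u = Real.exp (-t / 2) := by
      rw [hu, ← Real.exp_half]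
    rw [hval] at key
    have := Real.exp_le_exp.mp key
    linarith

theorem fisher_rao_vs_ce_in_t :
    (∀ t : ℝ, 0 ≤ t → (arccos (Real.sqrt (Real.exp (-t)))) ^ 2 ≤ t) ∧
    Filter.Tendsto (fun t : ℝ => (arccos (Real.sqrt (Real.exp (-t)))) ^ 2 / t)
      (nhdsWithin 0 (Set.Ioi 0)) (nhds 1) := by
  constructor
  · exact fun t ht => (bounds t ht).2
  · -- squeeze between (1 - exp(-t))/t and 1
    have hlo : Tendsto (fun t : ℝ => (1 - Real.exp (-t)) / t)
        (nhdsWithin 0 (Set.Ioi 0)) (nhds 1) := by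
      have hd : HasDerivAt (fun t : ℝ => 1 - Real.exp (-t)) 1 0 := by
        have : HasDerivAt (fun t : ℝ => Real.exp (-t)) (-1) 0 := by
          have h := ((Real.hasDerivAt_exp (-(0:ℝ))).comp 0 ((hasDerivAt_id (0:ℝ)).neg)); simp at h; exact h
        have h := (hasDerivAt_const (0:ℝ) (1:ℝ)).sub this; simp at h; exact h
      have h := hd.tendsto_slope_zero_right
      refine h.congr fun t => ?_
      simp only [zero_add, neg_zero, Real.exp_zero, smul_eq_mul, sub_sub_cancel_left]
      ring
    apply tendsto_of_tendsto_of_tendsto_of_le_of_le' hlo tendsto_const_nhds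
    · filter_upwards [self_mem_nhdsWithin] with t ht
      have ht' : (0:ℝ) < t := ht
      gcongr
      exact (bounds t ht'.le).1
    · filter_upwards [self_mem_nhdsWithin] with t ht
      rw [div_le_one ht]
      exact (bounds t ht.le).2
end

section
/- For q ∈ [0,1), the function g(x) = (arccos((1 − (1−q)x)^{1/(2(1−q))}))² satisfies lim_{x→0⁺} g(x)/x = 1. -/
open Real Filter

private lemma sin_div_lim :
    Tendsto (fun θ : ℝ => Real.sin θ / θ) (nhdsWithin 0 {(0:ℝ)}ᶜ) (nhds 1) := by
  have h := hasDerivAt_iff_tendsto_slope.mp (Real.hasDerivAt_sin 0)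
  simp only [Real.cos_zero] at h
  refine h.congr' ?_
  filter_upwards [self_mem_nhdsWithin] with θ hθ
  simp [slope_def_field]

private lemma theta_lim :
    Tendsto (fun θ : ℝ => θ ^ 2 / (1 - Real.cos θ)) (nhdsWithin 0 (Set.Ioi 0)) (nhds 2) := by
  have hmap : Tendsto (fun θ : ℝ => θ / 2) (nhdsWithin 0 (Set.Ioi 0))
      (nhdsWithin 0 {(0:ℝ)}ᶜ) := by
    apply Tendsto.mono_right _ (nhdsWithin_mono _ (by intro x hx; simpa using ne_of_gt hx))
    apply tendsto_nhdsWithin_of_tendsto_nhds_of_eventually_within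
    · have h2 : Tendsto (fun θ : ℝ => θ / 2) (nhds 0) (nhds 0) := by
        simpa using ((continuous_id.div_const (2:ℝ)).tendsto 0)
      exact h2.mono_left nhdsWithin_le_nhds
    · filter_upwards [self_mem_nhdsWithin] with θ hθ
      have hθ' : (0:ℝ) < θ := hθ
      exact Set.mem_Ioi.mpr (by positivity)
  have hs : Tendsto (fun θ : ℝ => Real.sin (θ / 2) / (θ / 2))
      (nhdsWithin 0 (Set.Ioi 0)) (nhds 1) := sin_div_lim.comp hmap
  have hlim : Tendsto (fun θ : ℝ => 2 / (Real.sin (θ / 2) / (θ / 2)) ^ 2)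
      (nhdsWithin 0 (Set.Ioi 0)) (nhds 2) := by
    have := (tendsto_const_nhds (x := (2:ℝ))).div (hs.pow 2) (by norm_num)
    simpa [Pi.div_def] using this
  refine hlim.congr' ?_
  filter_upwards [Ioo_mem_nhdsGT_of_mem (by constructor <;> [rfl; exact Real.pi_pos] :
      (0:ℝ) ∈ Set.Ico 0 Real.pi)] with θ hθ
  obtain ⟨h0, hπ⟩ := hθ
  have hsin : Real.sin (θ / 2) ≠ 0 := by
    apply ne_of_gt
    apply Real.sin_pos_of_pos_of_lt_pi (by positivity)
    linarith [Real.pi_pos]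
  have hcos : 1 - Real.cos θ = 2 * Real.sin (θ / 2) ^ 2 := by
    have h := Real.cos_two_mul (θ / 2)
    rw [show 2 * (θ / 2) = θ by ring] at h
    rw [h, Real.cos_sq']; ring
  rw [hcos]
  have hθ0 : θ ≠ 0 := ne_of_gt h0
  field_simp

private lemma arccos_lim :
    Tendsto (fun y : ℝ => Real.arccos y ^ 2 / (1 - y)) (nhdsWithin 1 (Set.Iio 1)) (nhds 2) := by
  have hmap : Tendsto Real.arccos (nhdsWithin 1 (Set.Iio 1)) (nhdsWithin 0 (Set.Ioi 0)) := by
    apply tendsto_nhdsWithin_of_tendsto_nhds_of_eventually_within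
    · have h : ContinuousAt Real.arccos 1 := Real.continuous_arccos.continuousAt
      simpa [Real.arccos_one] using h.tendsto.mono_left nhdsWithin_le_nhds
    · filter_upwards [self_mem_nhdsWithin] with y hy
      exact Set.mem_Ioi.mpr (Real.arccos_pos.mpr hy)
  have h := theta_lim.comp hmap
  refine h.congr' ?_
  have hmem : Set.Ioo (-1 : ℝ) 1 ∈ nhdsWithin 1 (Set.Iio 1) := by
    apply mem_nhdsWithin.mpr
    exact ⟨Set.Ioi (-1), isOpen_Ioi, by norm_num, by
      rintro y ⟨hy1, hy2⟩; exact ⟨hy1, hy2⟩⟩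
  filter_upwards [hmem] with y hy
  simp only [Function.comp]
  rw [Real.cos_arccos hy.1.le hy.2.le]

theorem fisher_rao_qce_first_order (q : ℝ) (hq0 : 0 ≤ q) (hq1 : q < 1) :
    Filter.Tendsto
      (fun x : ℝ =>
        (arccos ((1 - (1 - q) * x) ^ (1 / (2 * (1 - q))))) ^ 2 / x)
      (nhdsWithin 0 (Set.Ioi 0)) (nhds 1) := by
  set c := 1 - q with hc
  have hc0 : 0 < c := by simp [hc]; linarith
  set e := 1 / (2 * c) with he
  have he0 : 0 < e := by positivity
  set y : ℝ → ℝ := fun x => (1 - c * x) ^ e with hy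
  -- y tends to 1 within Iio 1
  have hyx : Tendsto y (nhdsWithin 0 (Set.Ioi 0)) (nhdsWithin 1 (Set.Iio 1)) := by
    apply tendsto_nhdsWithin_of_tendsto_nhds_of_eventually_within
    · have h1 : Tendsto (fun x : ℝ => 1 - c * x) (nhds 0) (nhds 1) := by
        have hcont : Continuous fun x : ℝ => 1 - c * x := by continuity
        simpa using hcont.tendsto 0
      have h2 : ContinuousAt (fun t : ℝ => t ^ e) 1 :=
        Real.continuousAt_rpow_const 1 e (Or.inl one_ne_zero)
      have h3 := (h2.tendsto.comp h1).mono_left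
        (nhdsWithin_le_nhds (s := Set.Ioi (0:ℝ)))
      simpa [hy, Real.one_rpow, Function.comp_def] using h3
    · filter_upwards [Ioo_mem_nhdsGT_of_mem (by constructor <;> [rfl; positivity] :
          (0:ℝ) ∈ Set.Ico 0 (1 / c))] with x hx
      have hbase0 : 0 < 1 - c * x := by
        have h := (lt_div_iff₀ hc0).mp hx.2
        nlinarith
      have hbase1 : 1 - c * x < 1 := by nlinarith [hx.1]
      exact Set.mem_Iio.mpr (Real.rpow_lt_one hbase0.le hbase1 he0)
  -- first factor
  have hF : Tendsto (fun x : ℝ => Real.arccos (y x) ^ 2 / (1 - y x))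
      (nhdsWithin 0 (Set.Ioi 0)) (nhds 2) := arccos_lim.comp hyx
  -- second factor: (1 - y x)/x → 1/2
  have hG : Tendsto (fun x : ℝ => (1 - y x) / x) (nhdsWithin 0 (Set.Ioi 0)) (nhds (1/2)) := by
    have hd : HasDerivAt (fun x : ℝ => 1 - (1 - c * x) ^ e) (1/2) 0 := by
      have hinner : HasDerivAt (fun x : ℝ => 1 - c * x) (-c) 0 := by
        simpa using ((hasDerivAt_id (0:ℝ)).const_mul c).const_sub 1
      have houter : HasDerivAt (fun t : ℝ => t ^ e) (e * (1:ℝ) ^ (e - 1))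
          ((fun x : ℝ => 1 - c * x) 0) := by
        have h : HasDerivAt (fun t : ℝ => t ^ e) (e * (1:ℝ) ^ (e - 1)) 1 :=
          Real.hasDerivAt_rpow_const (Or.inl one_ne_zero)
        simpa using h
      have hcomp := (houter.comp 0 hinner).const_sub 1
      have heq : (1:ℝ)/2 = -(e * (1:ℝ) ^ (e-1) * (-c)) := by
        rw [Real.one_rpow]; field_simp [he]; rw [he]; field_simp [hc0.ne']
      rw [heq]
      simpa using hcomp
    have hslope := hasDerivAt_iff_tendsto_slope.mp hd
    have h2 : Tendsto (fun x : ℝ => (1 - y x) / x) (nhdsWithin 0 {(0:ℝ)}ᶜ) (nhds (1/2)) := by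
      refine hslope.congr' ?_
      filter_upwards [self_mem_nhdsWithin] with x hx
      simp [slope_def_field, hy, Real.one_rpow]
    exact h2.mono_left (nhdsWithin_mono _ (by intro x hx; simpa using ne_of_gt hx))
  have hprod := hF.mul hG
  norm_num at hprod
  refine hprod.congr' ?_
  filter_upwards [hyx.eventually self_mem_nhdsWithin, self_mem_nhdsWithin] with x hx1 hx2
  have hyx1 : y x < 1 := hx1
  have h1y : 1 - y x ≠ 0 := by linarith
  have hx0 : (x:ℝ) ≠ 0 := ne_of_gt hx2
  field_simp
  simp only [hy, mul_comm c x]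
end

section
/- For any probability vector p ∈ Δ^{K−1} with K ≥ 2, the sum Σᵢ₌₁^K (arccos √pᵢ)² is bounded below by K·(arccos(1/√K))² and above by (π²/4)·(K−1). -/
open Real

lemma sin_slope_aux {a b : ℝ} (ha : 0 ≤ a) (hab : a ≤ b) (hb : b ≤ π) :
    a * Real.sin b ≤ b * Real.sin a := by
  rcases eq_or_lt_of_le (ha.trans hab) with hb0 | hb0
  · have : a = 0 := le_antisymm (hab.trans hb0.symm.le) ha
    simp [this, ← hb0]
  · have key := strictConcaveOn_sin_Icc.concaveOn.2 (Set.mem_Icc.2 ⟨le_rfl, Real.pi_pos.le⟩)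
      (Set.mem_Icc.2 ⟨hb0.le, hb⟩)
      (sub_nonneg.2 (div_le_one_of_le₀ hab hb0.le))
      (div_nonneg ha hb0.le) (by ring : (1 - a / b) + a / b = 1)
    simp only [smul_eq_mul, mul_zero, Real.sin_zero, zero_add] at key
    rw [div_mul_cancel₀ _ hb0.ne'] at key
    calc a * Real.sin b = b * (a / b * Real.sin b) := by field_simp
    _ ≤ b * Real.sin a := by nlinarith [key]

lemma G_ge {t0 : ℝ} (h0 : 0 < t0) (h1 : t0 < π / 2) {θ : ℝ} (hθ0 : 0 ≤ θ) (hθ1 : θ ≤ π / 2) :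
    t0 ^ 2 * Real.sin (2 * t0) + t0 * Real.cos (2 * t0) ≤
      θ ^ 2 * Real.sin (2 * t0) + t0 * Real.cos (2 * θ) := by
  set G : ℝ → ℝ := fun x => x ^ 2 * Real.sin (2 * t0) + t0 * Real.cos (2 * x) with hGdef
  have hG : ∀ x : ℝ, HasDerivAt G (2 * x * Real.sin (2 * t0) - 2 * t0 * Real.sin (2 * x)) x := by
    intro x
    have d1 : HasDerivAt (fun y : ℝ => y ^ 2 * Real.sin (2 * t0)) (2 * x * Real.sin (2 * t0)) x := by
      simpa using (hasDerivAt_pow 2 x).mul_const (Real.sin (2 * t0))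
    have d2 : HasDerivAt (fun y : ℝ => Real.cos (2 * y)) (-(Real.sin (2 * x)) * 2) x := by
      simpa using ((hasDerivAt_id' x).const_mul (2:ℝ)).cos
    have := d1.add (d2.const_mul t0)
    refine this.congr_deriv ?_
    ring
  have hcont : Continuous G := by
    continuity
  have hdiff : Differentiable ℝ G := fun x => (hG x).differentiableAt
  rcases le_total θ t0 with hle | hle
  · have hanti : AntitoneOn G (Set.Icc 0 t0) := by
      apply antitoneOn_of_deriv_nonpos (convex_Icc 0 t0) hcont.continuousOn
        (hdiff.differentiableOn)
      intro x hx
      rw [interior_Icc] at hx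
      rw [(hG x).deriv]
      have := sin_slope_aux (by linarith [hx.1] : (0:ℝ) ≤ 2 * x)
        (by linarith [hx.2] : 2 * x ≤ 2 * t0) (by linarith [h1, Real.pi_pos] : 2 * t0 ≤ π)
      linarith
    exact hanti (Set.mem_Icc.2 ⟨hθ0, hle⟩) (Set.mem_Icc.2 ⟨h0.le, le_rfl⟩) hle
  · have hmono : MonotoneOn G (Set.Icc t0 (π / 2)) := by
      apply monotoneOn_of_deriv_nonneg (convex_Icc t0 (π / 2)) hcont.continuousOn
        (hdiff.differentiableOn)
      intro x hx
      rw [interior_Icc] at hx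
      rw [(hG x).deriv]
      have := sin_slope_aux (by linarith : (0:ℝ) ≤ 2 * t0)
        (by linarith [hx.1] : 2 * t0 ≤ 2 * x) (by linarith [hx.2] : 2 * x ≤ π)
      linarith
    exact hmono (Set.mem_Icc.2 ⟨le_rfl, h1.le⟩) (Set.mem_Icc.2 ⟨hle, hθ1⟩) hle

theorem fisher_rao_loss_sum_bounds
    (K : ℕ) (hK : 2 ≤ K) (p : Fin K → ℝ)
    (hp : ∀ i, 0 ≤ p i) (hps : ∑ i, p i = 1) :
    (K : ℝ) * (arccos (1 / Real.sqrt K)) ^ 2 ≤ ∑ i, (arccos (Real.sqrt (p i))) ^ 2 ∧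
    ∑ i, (arccos (Real.sqrt (p i))) ^ 2 ≤ (π ^ 2 / 4) * (K - 1) := by
  have hKR : (2:ℝ) ≤ (K:ℝ) := by exact_mod_cast hK
  have hK0 : (0:ℝ) < (K:ℝ) := by linarith
  have hsqrtK : 1 < Real.sqrt K := by
    rw [show (1:ℝ) = Real.sqrt 1 by simp]
    exact Real.sqrt_lt_sqrt (by norm_num) (by linarith)
  set x0 : ℝ := 1 / Real.sqrt K with hx0def
  have hx0pos : 0 < x0 := by positivity
  have hx0lt1 : x0 < 1 := by
    rw [hx0def, div_lt_one (by linarith)]; exact hsqrtK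
  set t0 : ℝ := arccos x0 with ht0def
  have ht0pos : 0 < t0 := Real.arccos_pos.2 hx0lt1
  have ht0lt : t0 < π / 2 := Real.arccos_lt_pi_div_two.2 hx0pos
  have hcos_t0 : Real.cos t0 = x0 := Real.cos_arccos (by linarith) hx0lt1.le
  have hx0sq : x0 ^ 2 = 1 / K := by
    rw [hx0def, div_pow, one_pow, Real.sq_sqrt hK0.le]
  have hcos2t0 : Real.cos (2 * t0) = 2 / K - 1 := by
    rw [Real.cos_two_mul, hcos_t0, hx0sq]; ring
  set s : ℝ := Real.sin (2 * t0) with hsdef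
  have hs : 0 < s := Real.sin_pos_of_pos_of_lt_pi (by linarith) (by linarith)
  -- per-index facts
  have hpi1 : ∀ i, p i ≤ 1 := by
    intro i
    have := Finset.single_le_sum (f := p) (fun j _ => hp j) (Finset.mem_univ i)
    linarith [hps ▸ this]
  have hθ0 : ∀ i, 0 ≤ arccos (Real.sqrt (p i)) := fun i => Real.arccos_nonneg _
  have hθhalf : ∀ i, arccos (Real.sqrt (p i)) ≤ π / 2 :=
    fun i => Real.arccos_le_pi_div_two.2 (Real.sqrt_nonneg _)
  have hcos2θ : ∀ i, Real.cos (2 * arccos (Real.sqrt (p i))) = 2 * p i - 1 := by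
    intro i
    rw [Real.cos_two_mul, Real.cos_arccos (by linarith [Real.sqrt_nonneg (p i)])
      (Real.sqrt_le_one.mpr (hpi1 i)), Real.sq_sqrt (hp i)]
  constructor
  · -- lower bound
    have key : ∀ i, t0 ^ 2 * s + t0 * (2 / K - 1) ≤
        (arccos (Real.sqrt (p i))) ^ 2 * s + t0 * (2 * p i - 1) := by
      intro i
      have := G_ge ht0pos ht0lt (hθ0 i) (hθhalf i)
      rw [hcos2t0, hcos2θ i] at this
      exact this
    have big := Finset.sum_le_sum (fun i (_ : i ∈ Finset.univ) => key i)
    rw [Finset.sum_const, Finset.card_univ, Fintype.card_fin, nsmul_eq_mul] at big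
    have hrhs : ∑ i, ((arccos (Real.sqrt (p i))) ^ 2 * s + t0 * (2 * p i - 1)) =
        (∑ i, (arccos (Real.sqrt (p i))) ^ 2) * s + t0 * (2 - K) := by
      rw [Finset.sum_add_distrib, ← Finset.sum_mul, ← Finset.mul_sum]
      congr 1
      congr 1
      rw [Finset.sum_sub_distrib, ← Finset.mul_sum, hps, Finset.sum_const,
        Finset.card_univ, Fintype.card_fin]
      simp
    rw [hrhs] at big
    have hexp : (K:ℝ) * (t0 ^ 2 * s + t0 * (2 / K - 1)) =
        (K:ℝ) * t0 ^ 2 * s + t0 * (2 - K) := by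
      field_simp
    rw [hexp] at big
    have : (K:ℝ) * t0 ^ 2 * s ≤ (∑ i, (arccos (Real.sqrt (p i))) ^ 2) * s := by linarith
    exact le_of_mul_le_mul_right this hs
  · -- upper bound
    have key : ∀ i, (arccos (Real.sqrt (p i))) ^ 2 ≤ π ^ 2 / 4 * (1 - p i) := by
      intro i
      set θ := arccos (Real.sqrt (p i)) with hθdef
      have hj : 2 / π * θ ≤ Real.sin θ := Real.mul_le_sin (hθ0 i) (hθhalf i)
      have hθle : θ ≤ π / 2 * Real.sin θ := by
        have hπ : 0 < π := Real.pi_pos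
        calc θ = π / 2 * (2 / π * θ) := by field_simp
        _ ≤ π / 2 * Real.sin θ := by nlinarith
      have hsinsq : Real.sin θ ^ 2 = 1 - p i := by
        rw [hθdef, Real.sin_arccos, Real.sq_sqrt (by
          nlinarith [Real.sq_sqrt (hp i), Real.sqrt_nonneg (p i), hpi1 i] :
            0 ≤ 1 - Real.sqrt (p i) ^ 2)]
        rw [Real.sq_sqrt (hp i)]
      nlinarith [hθ0 i, Real.pi_pos]
    calc ∑ i, (arccos (Real.sqrt (p i))) ^ 2 ≤ ∑ i, π ^ 2 / 4 * (1 - p i) :=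
          Finset.sum_le_sum (fun i _ => key i)
    _ = π ^ 2 / 4 * (K - 1) := by
        rw [← Finset.mul_sum, Finset.sum_sub_distrib, hps, Finset.sum_const,
          Finset.card_univ, Fintype.card_fin]
        simp
end

section
/- The function x ↦ −arccos(√x)/√(x(1−x)) is injective on (0,1). -/
open Real

lemma sin_div_aux {s t : ℝ} (hs : 0 < s) (hst : s < t) (ht : t < π) :
    s * Real.sin t < t * Real.sin s := by
  have ht0 : 0 < t := hs.trans hst
  have hmem0 : (0:ℝ) ∈ Set.Icc 0 π := ⟨le_refl 0, Real.pi_pos.le⟩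
  have hmemt : t ∈ Set.Icc 0 π := ⟨ht0.le, ht.le⟩
  have hab : (1 - s / t) + s / t = 1 := by ring
  have hb : 0 < s / t := div_pos hs ht0
  have ha : 0 < 1 - s / t := by
    have : s / t < 1 := (div_lt_one ht0).2 hst
    linarith
  have h0 : (0:ℝ) ≠ t := ne_of_lt ht0
  have key := strictConcaveOn_sin_Icc.2 hmem0 hmemt h0 ha hb hab
  simp only [smul_eq_mul, mul_zero, Real.sin_zero, zero_add, zero_mul] at key
  have hst' : Real.sin (s / t * t) = Real.sin s := by
    rw [div_mul_cancel₀]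
    exact ne_of_gt ht0
  rw [hst'] at key
  rw [div_mul_eq_mul_div, div_lt_iff₀ ht0] at key
  linarith

lemma div_sin_inj {s t : ℝ} (hs0 : 0 < s) (hsπ : s < π) (ht0 : 0 < t) (htπ : t < π)
    (h : s / Real.sin s = t / Real.sin t) : s = t := by
  have hss : 0 < Real.sin s := Real.sin_pos_of_pos_of_lt_pi hs0 hsπ
  have hts : 0 < Real.sin t := Real.sin_pos_of_pos_of_lt_pi ht0 htπ
  have hcross : s * Real.sin t = t * Real.sin s := by
    field_simp at h
    linarith [h]
  rcases lt_trichotomy s t with hlt | heq | hgt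
  · exact absurd hcross (ne_of_lt (sin_div_aux hs0 hlt htπ))
  · exact heq
  · have := sin_div_aux ht0 hgt hsπ
    linarith
theorem fr_derivative_injective :
    Set.InjOn (fun x : ℝ => - arccos (Real.sqrt x) / Real.sqrt (x * (1 - x)))
      (Set.Ioo 0 1) := by
  intro x hx y hy hf
  obtain ⟨hx0, hx1⟩ := hx
  obtain ⟨hy0, hy1⟩ := hy
  set a := Real.arccos (Real.sqrt x) with ha
  set b := Real.arccos (Real.sqrt y) with hb
  have hsx0 : 0 < Real.sqrt x := Real.sqrt_pos.2 hx0
  have hsx1 : Real.sqrt x < 1 := by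
    rw [show (1:ℝ) = Real.sqrt 1 by simp]
    exact Real.sqrt_lt_sqrt hx0.le hx1
  have hsy0 : 0 < Real.sqrt y := Real.sqrt_pos.2 hy0
  have hsy1 : Real.sqrt y < 1 := by
    rw [show (1:ℝ) = Real.sqrt 1 by simp]
    exact Real.sqrt_lt_sqrt hy0.le hy1
  have ha0 : 0 < a := Real.arccos_pos.2 hsx1
  have haπ : a < π / 2 := Real.arccos_lt_pi_div_two.2 hsx0
  have hb0 : 0 < b := Real.arccos_pos.2 hsy1
  have hbπ : b < π / 2 := Real.arccos_lt_pi_div_two.2 hsy0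
  have hcosa : Real.cos a = Real.sqrt x :=
    Real.cos_arccos (by linarith [Real.sqrt_nonneg x]) hsx1.le
  have hcosb : Real.cos b = Real.sqrt y :=
    Real.cos_arccos (by linarith [Real.sqrt_nonneg y]) hsy1.le
  have hsina : Real.sin a = Real.sqrt (1 - x) := by
    rw [ha, Real.sin_arccos, Real.sq_sqrt hx0.le]
  have hsinb : Real.sin b = Real.sqrt (1 - y) := by
    rw [hb, Real.sin_arccos, Real.sq_sqrt hy0.le]
  have hsqx : Real.sqrt (x * (1 - x)) = Real.cos a * Real.sin a := by
    rw [hcosa, hsina, ← Real.sqrt_mul hx0.le]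
  have hsqy : Real.sqrt (y * (1 - y)) = Real.cos b * Real.sin b := by
    rw [hcosb, hsinb, ← Real.sqrt_mul hy0.le]
  simp only at hf
  rw [hsqx, hsqy] at hf
  -- turn into 2a / sin (2a) = 2b / sin (2b)
  have hca : 0 < Real.cos a * Real.sin a := by
    apply mul_pos (Real.cos_pos_of_mem_Ioo ⟨by linarith [Real.pi_pos], haπ⟩)
    exact Real.sin_pos_of_pos_of_lt_pi ha0 (by linarith [Real.pi_pos])
  have hcb : 0 < Real.cos b * Real.sin b := by
    apply mul_pos (Real.cos_pos_of_mem_Ioo ⟨by linarith [Real.pi_pos], hbπ⟩)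
    exact Real.sin_pos_of_pos_of_lt_pi hb0 (by linarith [Real.pi_pos])
  have h2a : Real.sin (2 * a) = 2 * (Real.sin a * Real.cos a) := by
    rw [Real.sin_two_mul]; ring
  have h2b : Real.sin (2 * b) = 2 * (Real.sin b * Real.cos b) := by
    rw [Real.sin_two_mul]; ring
  have key : a / (Real.cos a * Real.sin a) = b / (Real.cos b * Real.sin b) := by
    have := hf
    rw [← ha, ← hb, neg_div, neg_div, neg_inj] at this
    exact this
  have key' : a * (Real.cos b * Real.sin b) = b * (Real.cos a * Real.sin a) :=
    (div_eq_div_iff hca.ne' hcb.ne').1 key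
  have heq : (2 * a) / Real.sin (2 * a) = (2 * b) / Real.sin (2 * b) := by
    rw [h2a, h2b, div_eq_div_iff (by linarith) (by linarith)]
    linear_combination 4 * key'
  have hab : 2 * a = 2 * b := by
    apply div_sin_inj (by linarith) (by linarith) (by linarith) (by linarith) heq
  have hab' : a = b := by linarith
  have : Real.sqrt x = Real.sqrt y := by rw [← hcosa, ← hcosb, hab']
  calc x = Real.sqrt x ^ 2 := (Real.sq_sqrt hx0.le).symm
  _ = Real.sqrt y ^ 2 := by rw [this]
  _ = y := Real.sq_sqrt hy0.le
end

section
/- With η parametrised as η = α(1 − 1/K) for fixed α ∈ [0,1), the Fisher-Rao robustness bound satisfies lim_{K→∞} A_FR(K, α(1−1/K)) = 0, where A_FR(K,η) = η·(π²/4 − (K/(K−1))·(arccos(1/√K))²). -/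
open Real Filter

theorem A_FR_tendsto_zero (α : ℝ) (hα0 : 0 ≤ α) (hα1 : α < 1) :
    Filter.Tendsto
      (fun K : ℕ =>
        (α * (1 - 1 / (K : ℝ))) *
          (π ^ 2 / 4 - ((K : ℝ) / ((K : ℝ) - 1)) * (arccos (1 / Real.sqrt K)) ^ 2))
      Filter.atTop (nhds 0) := by
  have h1 : Tendsto (fun K : ℕ => (K : ℝ)) atTop atTop := tendsto_natCast_atTop_atTop
  have hinv : Tendsto (fun K : ℕ => 1 / (K : ℝ)) atTop (nhds 0) :=
    tendsto_one_div_atTop_nhds_zero_nat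
  have hinvs : Tendsto (fun K : ℕ => 1 / Real.sqrt K) atTop (nhds 0) := by
    have h2 := (Real.continuous_sqrt.tendsto 0).comp hinv
    rw [Real.sqrt_zero] at h2
    refine h2.congr fun K => ?_
    simp [Function.comp, one_div, Real.sqrt_inv]
  have harccos : Tendsto (fun K : ℕ => arccos (1 / Real.sqrt K)) atTop (nhds (π / 2)) := by
    have := (Real.continuous_arccos.tendsto 0).comp hinvs
    simpa [Real.arccos_zero, Function.comp_def] using this
  have hratio : Tendsto (fun K : ℕ => (K : ℝ) / ((K : ℝ) - 1)) atTop (nhds 1) := by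
    have h : Tendsto (fun K : ℕ => 1 / (1 - 1 / (K : ℝ))) atTop (nhds 1) := by
      have hd : Tendsto (fun K : ℕ => 1 - 1 / (K : ℝ)) atTop (nhds 1) := by
        simpa using (tendsto_const_nhds (x := (1:ℝ)) (f := atTop)).sub hinv
      simpa [Pi.div_def, one_div] using (tendsto_const_nhds (x := (1:ℝ)) (f := atTop)).div hd one_ne_zero
    refine h.congr' ?_
    filter_upwards [eventually_gt_atTop 0] with K hK
    have hK0 : (K : ℝ) ≠ 0 := Nat.cast_ne_zero.mpr hK.ne'
    field_simp
  have hmain :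
      Tendsto
        (fun K : ℕ =>
          (α * (1 - 1 / (K : ℝ))) *
            (π ^ 2 / 4 - ((K : ℝ) / ((K : ℝ) - 1)) * (arccos (1 / Real.sqrt K)) ^ 2))
        atTop (nhds ((α * (1 - 0)) * (π ^ 2 / 4 - 1 * (π / 2) ^ 2))) := by
    exact ((tendsto_const_nhds.sub hinv).const_mul α).mul
      ((tendsto_const_nhds.sub (hratio.mul (harccos.pow 2))))
  have : (α * (1 - 0)) * (π ^ 2 / 4 - 1 * (π / 2) ^ 2) = 0 := by ring
  rwa [this] at hmain
end

section
/- With η parametrised as η = α(1 − 1/K) for fixed α ∈ [0,1), the bound B_FR satisfies lim_{K→∞} B_FR(K, α(1−1/K)) = 0, where B_FR(K,η) = η·(K(arccos(1/√K))² − (π²/4)(K−1))/(K − 1 − ηK). -/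
open Real Filter

theorem B_FR_tendsto_zero (α : ℝ) (hα0 : 0 ≤ α) (hα1 : α < 1) :
    Filter.Tendsto
      (fun K : ℕ =>
        (α * (1 - 1 / (K : ℝ))) *
          ((K : ℝ) * (arccos (1 / Real.sqrt K)) ^ 2 - (π ^ 2 / 4) * ((K : ℝ) - 1)) /
          ((K : ℝ) - 1 - (α * (1 - 1 / (K : ℝ))) * K))
      Filter.atTop (nhds 0) := by
  have hα : (1 : ℝ) - α ≠ 0 := by linarith
  have key : Tendsto
      (fun K : ℕ => (α / (1 - α)) *
        ((arccos (1 / Real.sqrt K)) ^ 2 - (π ^ 2 / 4) * (1 - 1 / (K : ℝ))))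
      atTop (nhds 0) := by
    have hs : Tendsto Real.sqrt atTop atTop := by
      apply tendsto_atTop_atTop.2
      intro b
      refine ⟨b ^ 2, fun a ha => ?_⟩
      nlinarith [Real.sq_sqrt (le_trans (sq_nonneg b) ha), Real.sqrt_nonneg a]
    have hsqrt : Tendsto (fun K : ℕ => 1 / Real.sqrt K) atTop (nhds 0) := by
      apply Tendsto.div_atTop tendsto_const_nhds
      exact hs.comp tendsto_natCast_atTop_atTop
    have harccos : Tendsto (fun K : ℕ => arccos (1 / Real.sqrt K)) atTop (nhds (π / 2)) := by
      have := (Real.continuous_arccos.tendsto 0).comp hsqrt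
      simpa [Real.arccos_zero, Function.comp_def] using this
    have hinv : Tendsto (fun K : ℕ => 1 / (K : ℝ)) atTop (nhds 0) :=
      tendsto_one_div_atTop_nhds_zero_nat
    have h := (tendsto_const_nhds.mul
      (((harccos.pow 2).sub (tendsto_const_nhds.mul
        (tendsto_const_nhds.sub hinv))) :
        Tendsto (fun K : ℕ => (arccos (1 / Real.sqrt K)) ^ 2 -
          (π ^ 2 / 4) * (1 - 1 / (K : ℝ))) atTop
          (nhds ((π / 2) ^ 2 - (π ^ 2 / 4) * (1 - 0)))) :
      Tendsto _ atTop (nhds ((α / (1 - α)) * ((π / 2) ^ 2 - (π ^ 2 / 4) * (1 - 0)))))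
    convert h using 2
    ring
  apply key.congr'
  filter_upwards [eventually_ge_atTop 2] with K hK
  have hK0 : (K : ℝ) ≥ 2 := by exact_mod_cast hK
  have hKne : (K : ℝ) ≠ 0 := by linarith
  have hK1 : (K : ℝ) - 1 ≠ 0 := by linarith
  have hD : (K : ℝ) - 1 - (α * (1 - 1 / (K : ℝ))) * K = (1 - α) * ((K : ℝ) - 1) := by
    field_simp
  have hDne : (1 - α) * ((K : ℝ) - 1) ≠ 0 := mul_ne_zero hα hK1
  rw [hD, eq_div_iff hDne]
  field_simp
end
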